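/- arXiv:2206.06557 — 2 statements merged into one kernel-verified Lean document; each statement's English description precedes it below -/
import Mathlib

section
/- Let C_A, C_B ⊆ 𝔽₂ⁿ be codes with distances d_A, d_B whose dual tensor code is w-robust for some w ≤ d_A d_B / 2. Then for every x ∈ 𝔽₂^{n×n} with d(x, C_A⊗𝔽₂ⁿ) + d(x, 𝔽₂ⁿ⊗C_B) ≤ w, we have d(x, C_A ⊗ C_B) ≤ (3/2)·(d(x, C_A⊗𝔽₂ⁿ) + d(x, 𝔽₂ⁿ⊗C_B)). -/
def hw {n : ℕ} (x : Fin n → ZMod 2) : ℕ :=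
  (Finset.univ.filter fun i => x i ≠ 0).card

def mw {m n : ℕ} (X : Matrix (Fin m) (Fin n) (ZMod 2)) : ℕ :=
  (Finset.univ.filter fun p : Fin m × Fin n => X p.1 p.2 ≠ 0).card

def colCode {m n : ℕ} (C : Submodule (ZMod 2) (Fin m → ZMod 2)) :
    Submodule (ZMod 2) (Matrix (Fin m) (Fin n) (ZMod 2)) where
  carrier := {X | ∀ j, (fun i => X i j) ∈ C}
  add_mem' := by
    intro X Y hX hY j
    have h : (fun i => (X + Y) i j) = (fun i => X i j) + (fun i => Y i j) := by
      funext i; simp [Matrix.add_apply]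
    rw [h]; exact C.add_mem (hX j) (hY j)
  zero_mem' := by
    intro j
    have h : (fun i => (0 : Matrix (Fin m) (Fin n) (ZMod 2)) i j) = (0 : Fin m → ZMod 2) := by
      funext i; simp
    rw [h]; exact C.zero_mem
  smul_mem' := by
    intro c X hX j
    have h : (fun i => (c • X) i j) = c • (fun i => X i j) := by
      funext i; simp [Matrix.smul_apply]
    rw [h]; exact C.smul_mem c (hX j)

def rowCode {m n : ℕ} (C : Submodule (ZMod 2) (Fin n → ZMod 2)) :
    Submodule (ZMod 2) (Matrix (Fin m) (Fin n) (ZMod 2)) where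
  carrier := {X | ∀ i, (fun j => X i j) ∈ C}
  add_mem' := by
    intro X Y hX hY i
    have h : (fun j => (X + Y) i j) = (fun j => X i j) + (fun j => Y i j) := by
      funext j; simp [Matrix.add_apply]
    rw [h]; exact C.add_mem (hX i) (hY i)
  zero_mem' := by
    intro i
    have h : (fun j => (0 : Matrix (Fin m) (Fin n) (ZMod 2)) i j) = (0 : Fin n → ZMod 2) := by
      funext j; simp
    rw [h]; exact C.zero_mem
  smul_mem' := by
    intro c X hX i
    have h : (fun j => (c • X) i j) = c • (fun j => X i j) := by
      funext j; simp [Matrix.smul_apply]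
    rw [h]; exact C.smul_mem c (hX i)

def isMinDist {n : ℕ} (C : Submodule (ZMod 2) (Fin n → ZMod 2)) (d : ℕ) : Prop :=
  (∀ x ∈ C, x ≠ 0 → d ≤ hw x) ∧ ∃ x ∈ C, x ≠ 0 ∧ hw x = d

/-- The dual tensor code of `C_A, C_B` is `w`-robust: every codeword of weight at most `w`
is supported on at most `|X|/d_A` nonzero columns and `|X|/d_B` nonzero rows. -/
def wRobust {n : ℕ} (CA CB : Submodule (ZMod 2) (Fin n → ZMod 2)) (dA dB w : ℕ) : Prop :=
  ∀ X ∈ colCode CA ⊔ rowCode CB, mw X ≤ w →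
    ∃ R Cl : Finset (Fin n),
      R.card * dB ≤ mw X ∧ Cl.card * dA ≤ mw X ∧
      ∀ i j, i ∉ R → j ∉ Cl → X i j = 0

/-- Distance from a matrix to a set (code) of matrices. -/
noncomputable def mdist {m n : ℕ} (x : Matrix (Fin m) (Fin n) (ZMod 2))
    (C : Submodule (ZMod 2) (Matrix (Fin m) (Fin n) (ZMod 2))) : ℕ :=
  sInf {k | ∃ y ∈ C, mw (x - y) = k}

/-!
Let `a ∈ C_A ⊗ 𝔽₂ⁿ` and `b ∈ 𝔽₂ⁿ ⊗ C_B` be closest to `x`. Their difference `X = a - b` is a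
low-weight word of the dual tensor code, so robustness confines it to rows `R` and columns `Cl`
with `|R| < d_A`, `|Cl| < d_B` and `2|R||Cl| ≤ |X|`. As no nonzero word of `C_A` lives on `R`, some
projection `E` onto `C_A` kills every vector supported on `R`; applying it to the columns of `b`
gives `c ∈ C_A ⊗ C_B`. Then `a - c` lives on the columns `Cl` and `b - c` on the rows `R` (a row
of `b - c` outside `R` is a word of `C_B` supported on `Cl`), so
`|a - c| + |b - c| ≤ |X| + 2|R||Cl| ≤ 2|X|`, and averaging `|x - c| ≤ d(x, a) + |a - c|` with
`|x - c| ≤ d(x, b) + |b - c|` gives the factor `3/2`.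
-/

open Finset Matrix

section Weight

variable {m n : ℕ}

lemma hw_pos {v : Fin n → ZMod 2} (hv : v ≠ 0) : 0 < hw v := by
  obtain ⟨i, hi⟩ := Function.ne_iff.mp hv
  exact card_pos.mpr ⟨i, by simpa using hi⟩

lemma hw_le_card {v : Fin n → ZMod 2} {S : Finset (Fin n)} (hv : ∀ i ∉ S, v i = 0) :
    hw v ≤ S.card :=
  card_le_card fun i hi => by
    by_contra hiS
    exact (mem_filter.mp hi).2 (hv i hiS)

lemma mw_eq_sum (X : Matrix (Fin m) (Fin n) (ZMod 2)) :
    mw X = ∑ p : Fin m × Fin n, if X p.1 p.2 ≠ 0 then 1 else 0 :=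
  card_filter _ _

lemma mw_neg (X : Matrix (Fin m) (Fin n) (ZMod 2)) : mw (-X) = mw X := by
  simp [mw]

lemma mw_sub_comm (X Y : Matrix (Fin m) (Fin n) (ZMod 2)) : mw (X - Y) = mw (Y - X) := by
  rw [← mw_neg, neg_sub]

lemma mw_add_le (X Y : Matrix (Fin m) (Fin n) (ZMod 2)) : mw (X + Y) ≤ mw X + mw Y := by
  refine (card_le_card fun p hp => ?_).trans (card_union_le _ _)
  simp only [mem_union, mem_filter, mem_univ, true_and] at hp ⊢
  by_contra! h
  exact hp (by simp [h.1, h.2])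

lemma mw_sub_le_add (X Y Z : Matrix (Fin m) (Fin n) (ZMod 2)) :
    mw (X - Z) ≤ mw (X - Y) + mw (Y - Z) := by
  simpa using mw_add_le (X - Y) (Y - Z)

/-- Outside `R × Cl` at most one of `Y`, `Z` is nonzero, and it agrees there with `±(Y - Z)`. -/
lemma mw_add_mw_le_mw_sub_add {Y Z : Matrix (Fin m) (Fin n) (ZMod 2)} {R : Finset (Fin m)}
    {Cl : Finset (Fin n)} (hY : ∀ i, ∀ j ∉ Cl, Y i j = 0) (hZ : ∀ i ∉ R, ∀ j, Z i j = 0) :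
    mw Y + mw Z ≤ mw (Y - Z) + 2 * (R.card * Cl.card) := by
  have hRCl : R.card * Cl.card = ∑ p : Fin m × Fin n, if p ∈ R ×ˢ Cl then 1 else 0 := by
    rw [sum_boole, Nat.cast_id, filter_mem_eq_inter, univ_inter, card_product]
  rw [mw_eq_sum, mw_eq_sum, mw_eq_sum, hRCl, ← sum_add_distrib, mul_sum, ← sum_add_distrib]
  refine sum_le_sum fun ⟨i, j⟩ _ => ?_
  by_cases hi : i ∈ R <;> by_cases hj : j ∈ Cl
  · split_ifs <;> simp_all
  · simp [hY i j hj, hj]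
  · simp [hZ i hi j, hi]
  · simp [hY i j hj, hZ i hi j]

end Weight

lemma exists_mw_sub_eq_mdist {m n : ℕ} (x : Matrix (Fin m) (Fin n) (ZMod 2))
    (C : Submodule (ZMod 2) (Matrix (Fin m) (Fin n) (ZMod 2))) :
    ∃ y ∈ C, mw (x - y) = mdist x C :=
  Nat.sInf_mem (s := {k | ∃ y ∈ C, mw (x - y) = k}) ⟨_, 0, C.zero_mem, rfl⟩

lemma mdist_le_mw_sub {m n : ℕ} (x : Matrix (Fin m) (Fin n) (ZMod 2))
    {C : Submodule (ZMod 2) (Matrix (Fin m) (Fin n) (ZMod 2))}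
    {y : Matrix (Fin m) (Fin n) (ZMod 2)} (hy : y ∈ C) : mdist x C ≤ mw (x - y) :=
  Nat.sInf_le ⟨y, hy, rfl⟩

namespace isMinDist

variable {n d : ℕ} {C : Submodule (ZMod 2) (Fin n → ZMod 2)}

lemma pos (h : isMinDist C d) : 0 < d := by
  obtain ⟨v, -, hv, rfl⟩ := h.2
  exact hw_pos hv

lemma eq_zero_of_supported (h : isMinDist C d) {S : Finset (Fin n)} (hS : S.card < d)
    {v : Fin n → ZMod 2} (hv : v ∈ C) (hvS : ∀ i ∉ S, v i = 0) : v = 0 := by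
  by_contra hne
  exact absurd ((h.1 v hv hne).trans (hw_le_card hvS)) hS.not_ge

end isMinDist

lemma mul_mem_rowCode {l m n : ℕ} {C : Submodule (ZMod 2) (Fin n → ZMod 2)}
    (F : Matrix (Fin l) (Fin m) (ZMod 2)) {M : Matrix (Fin m) (Fin n) (ZMod 2)}
    (hM : M ∈ rowCode C) : F * M ∈ rowCode C := fun i => by
  change F i ᵥ* M ∈ C
  rw [vecMul_eq_sum]
  exact C.sum_mem fun k _ => C.smul_mem _ (hM k)

lemma Submodule.exists_projection_of_disjoint {K E : Type*} [DivisionRing K] [AddCommGroup E]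
    [Module K E] {p q : Submodule K E} (h : Disjoint p q) :
    ∃ f : E →ₗ[K] E, (∀ x, f x ∈ p) ∧ (∀ x ∈ p, f x = x) ∧ ∀ x ∈ q, f x = 0 := by
  obtain ⟨q', hqq', hq'p⟩ := h.symm.exists_isCompl
  exact ⟨p.projection q' hq'p.symm, projection_apply_mem _,
    fun x hx => projection_apply_of_mem_left _ hx,
    fun x hx => projection_apply_of_mem_right _ (hqq' hx)⟩

lemma exists_mem_inf_of_sub_supported {m n : ℕ} {CA : Submodule (ZMod 2) (Fin m → ZMod 2)}
    {CB : Submodule (ZMod 2) (Fin n → ZMod 2)} {R : Finset (Fin m)} {Cl : Finset (Fin n)}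
    (hR : ∀ v ∈ CA, (∀ i ∉ R, v i = 0) → v = 0) (hCl : ∀ v ∈ CB, (∀ j ∉ Cl, v j = 0) → v = 0)
    {a b : Matrix (Fin m) (Fin n) (ZMod 2)} (ha : a ∈ colCode CA) (hb : b ∈ rowCode CB)
    (hab : ∀ i j, i ∉ R → j ∉ Cl → (a - b) i j = 0) :
    ∃ c ∈ colCode CA ⊓ rowCode CB,
      (∀ i, ∀ j ∉ Cl, (a - c) i j = 0) ∧ ∀ i ∉ R, ∀ j, (b - c) i j = 0 := by
  let V : Submodule (ZMod 2) (Fin m → ZMod 2) := Submodule.pi (↑R)ᶜ fun _ => ⊥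
  have hV : ∀ v, v ∈ V ↔ ∀ i ∉ R, v i = 0 := by simp [V, Submodule.mem_pi]
  have hdisj : Disjoint CA V :=
    Submodule.disjoint_def.mpr fun v hvA hvV => hR v hvA ((hV v).mp hvV)
  obtain ⟨E, hEmem, hEleft, hEright⟩ := Submodule.exists_projection_of_disjoint hdisj
  have hcol : ∀ i j, (LinearMap.toMatrix' E * b) i j = E (fun k => b k j) i := fun i j => by
    rw [← LinearMap.toMatrix'_mulVec]; rfl
  have hEb : ∀ j ∉ Cl, E (fun k => b k j) = fun k => a k j := fun j hj => by
    have hXV : (fun k => (a - b) k j) ∈ V := (hV _).mpr fun i hi => hab i j hi hj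
    have hsplit : (fun k => b k j) = (fun k => a k j) - fun k => (a - b) k j := by
      funext k; simp
    rw [hsplit, map_sub, hEleft _ (ha j), hEright _ hXV, sub_zero]
  have hrow : b - LinearMap.toMatrix' E * b ∈ rowCode CB :=
    Submodule.sub_mem _ hb (mul_mem_rowCode _ hb)
  refine ⟨LinearMap.toMatrix' E * b, ⟨fun j => ?_, mul_mem_rowCode _ hb⟩, fun i j hj => ?_,
    fun i hi => congrFun (hCl _ (hrow i) fun j hj => ?_)⟩
  · simpa only [hcol] using hEmem (fun k => b k j)
  · simp [hcol, hEb j hj]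
  · have := hab i j hi hj
    simp only [Matrix.sub_apply, hcol, hEb j hj] at this ⊢
    rw [← neg_sub, this, neg_zero]

lemma lt_of_mul_le_of_two_mul_le {r s d e : ℕ} (hd : 0 < d) (he : 0 < e) (hr : r * e ≤ s)
    (hs : 2 * s ≤ d * e) : r < d := by
  nlinarith

lemma two_mul_mul_le_of_mul_le {r c s d e : ℕ} (hd : 0 < d) (he : 0 < e) (hr : r * e ≤ s)
    (hc : c * d ≤ s) (hs : 2 * s ≤ d * e) : 2 * (r * c) ≤ s := by
  refine Nat.le_of_mul_le_mul_right ?_ (Nat.mul_pos hd he)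
  calc 2 * (r * c) * (d * e) = 2 * ((r * e) * (c * d)) := by ring
    _ ≤ 2 * (s * s) := by gcongr
    _ ≤ s * (d * e) := by nlinarith

/-- Robustness implies robust testability of the tensor code
(`d(x, C_A⊗C_B) ≤ (3/2)(d(x,C_A⊗𝔽₂ⁿ) + d(x,𝔽₂ⁿ⊗C_B))`). -/
theorem robustness_testability (n dA dB w : ℕ)
    (CA CB : Submodule (ZMod 2) (Fin n → ZMod 2))
    (hdA : isMinDist CA dA) (hdB : isMinDist CB dB)
    (hw' : 2 * w ≤ dA * dB)
    (hrob : wRobust CA CB dA dB w)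
    (x : Matrix (Fin n) (Fin n) (ZMod 2))
    (hx : mdist x (colCode CA) + mdist x (rowCode CB) ≤ w) :
    2 * mdist x (colCode CA ⊓ rowCode CB) ≤
      3 * (mdist x (colCode CA) + mdist x (rowCode CB)) := by
  obtain ⟨a, ha, hxa⟩ := exists_mw_sub_eq_mdist x (colCode CA)
  obtain ⟨b, hb, hxb⟩ := exists_mw_sub_eq_mdist x (rowCode CB)
  have hab : mw (a - b) ≤ mdist x (colCode CA) + mdist x (rowCode CB) := by
    simpa only [mw_sub_comm a x, hxa, hxb] using mw_sub_le_add a x b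
  obtain ⟨R, Cl, hR, hCl, hsupp⟩ :=
    hrob (a - b) (Submodule.sub_mem _ (Submodule.mem_sup_left ha) (Submodule.mem_sup_right hb))
      (hab.trans hx)
  have hw2 : 2 * mw (a - b) ≤ dA * dB := by omega
  have hRdA := lt_of_mul_le_of_two_mul_le hdA.pos hdB.pos hR hw2
  have hCldB := lt_of_mul_le_of_two_mul_le hdB.pos hdA.pos hCl (by linarith)
  have hRCl := two_mul_mul_le_of_mul_le hdA.pos hdB.pos hR hCl hw2
  obtain ⟨c, hc, hac, hbc⟩ := exists_mem_inf_of_sub_supported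
    (fun v hv => hdA.eq_zero_of_supported hRdA hv) (fun v hv => hdB.eq_zero_of_supported hCldB hv)
    ha hb hsupp
  have hcount := mw_add_mw_le_mw_sub_add hac hbc
  rw [sub_sub_sub_cancel_right] at hcount
  have hxca := (mdist_le_mw_sub x hc).trans (mw_sub_le_add x a c)
  have hxcb := (mdist_le_mw_sub x hc).trans (mw_sub_le_add x b c)
  omega
end

section
/- Let C_A, C_B ⊆ 𝔽₂^Δ be linear codes each of minimum distance at least δΔ, and let γ ∈ (0,1). Suppose X is a codeword of the dual tensor code C_A ⊗ 𝔽₂^Δ + 𝔽₂^Δ ⊗ C_B such that every row and column of X has Hamming weight at most Δ^{1/2+2ε}, X is supported on the union of at most γδΔ nonzero rows and at most γδΔ nonzero columns, and Δ^{1/2+2ε} < (1−γ)δΔ. Then X = 0. -/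
section ZeroOn

variable {K ι : Type*} [Field K] [DecidableEq ι]

def zeroOn (S : Finset ι) : (ι → K) →ₗ[K] ι → K :=
  LinearMap.pi fun i => if i ∈ S then 0 else LinearMap.proj i

theorem zeroOn_apply (S : Finset ι) (v : ι → K) (i : ι) :
    zeroOn S v i = if i ∈ S then 0 else v i := by
  by_cases hi : i ∈ S <;> simp [zeroOn, hi]

theorem exists_eq_on_compl_of_mem_map_zeroOn {S : Finset ι} {C : Submodule K (ι → K)}
    {x : ι → K} (hx : x ∈ C.map (zeroOn S)) : ∃ y ∈ C, ∀ i ∉ S, y i = x i := by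
  obtain ⟨y, hy, rfl⟩ := hx
  exact ⟨y, hy, fun i hi => by simp [zeroOn_apply, hi]⟩

end ZeroOn

namespace Matrix

variable {K : Type*} [Field K] {m n p : Type*}

theorem transpose_mul_mem_of_transpose_mem [Fintype n] {U : Submodule K (m → K)}
    {M : Matrix m n K} (hM : ∀ k, Mᵀ k ∈ U) (N : Matrix n p K) (j : p) : (M * N)ᵀ j ∈ U := by
  have h : (M * N)ᵀ j = ∑ k, N k j • Mᵀ k := by
    ext i; simp [mul_apply, mul_comm]
  rw [h]
  exact U.sum_mem fun k _ => U.smul_mem _ (hM k)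

theorem mul_row_mem_of_row_mem [Fintype n] {V : Submodule K (p → K)} (M : Matrix m n K)
    {N : Matrix n p K} (hN : ∀ k, N k ∈ V) (i : m) : (M * N) i ∈ V := by
  have h : (M * N) i = ∑ k, M i k • N k := by
    ext j; simp [mul_apply]
  rw [h]
  exact V.sum_mem fun k _ => V.smul_mem _ (hN k)

theorem exists_mul_eq_self_of_transpose_mem [Fintype m] [DecidableEq m] {U : Submodule K (m → K)}
    {Z : Matrix m n K} (hZ : ∀ j, Zᵀ j ∈ U) :
    ∃ P : Matrix m m K, (∀ i, Pᵀ i ∈ U) ∧ P * Z = Z := by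
  -- `P` is the matrix of a projection onto the column span `W` of `Z`.
  set W := Submodule.span K (Set.range Zᵀ)
  obtain ⟨g, hg⟩ := W.subtype.exists_leftInverse_of_injective W.ker_subtype
  refine ⟨LinearMap.toMatrix' (W.subtype ∘ₗ g), fun i => ?_, ?_⟩
  · exact Submodule.span_le.mpr (Set.range_subset_iff.mpr hZ) (g (Pi.single i 1)).2
  · ext i j
    have hcol : W.subtype (g (Zᵀ j)) = Zᵀ j :=
      congrArg W.subtype (LinearMap.congr_fun hg ⟨Zᵀ j, Submodule.subset_span ⟨j, rfl⟩⟩)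
    calc (LinearMap.toMatrix' (W.subtype ∘ₗ g) * Z) i j
        = (LinearMap.toMatrix' (W.subtype ∘ₗ g) *ᵥ Zᵀ j) i := rfl
      _ = Z i j := by rw [LinearMap.toMatrix'_mulVec]; exact congrFun hcol i

theorem exists_tensor_eq_on_compl [Fintype m] [Fintype n] [DecidableEq m]
    {CA : Submodule K (m → K)} {CB : Submodule K (n → K)}
    {Sr : Finset m} {Sc : Finset n} {A B : Matrix m n K}
    (hA : ∀ j, Aᵀ j ∈ CA) (hB : ∀ i, B i ∈ CB) (hAB : ∀ i ∉ Sr, ∀ j ∉ Sc, A i j = B i j) :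
    ∃ T : Matrix m n K, (∀ j, Tᵀ j ∈ CA) ∧ (∀ i, T i ∈ CB) ∧
      ∀ i ∉ Sr, ∀ j ∉ Sc, T i j = A i j := by
  -- `Z = P * Z` with the columns of `P` in the punctured code; lifting the columns of `P` to
  -- `CA` and the rows of `Z` to `CB` gives `T`.
  set Z : Matrix m n K := of fun i j => zeroOn Sr (Aᵀ j) i
  obtain ⟨P, hP, hPZ⟩ := exists_mul_eq_self_of_transpose_mem (U := CA.map (zeroOn Sr)) (Z := Z)
    fun j => Submodule.mem_map_of_mem (hA j)
  choose p hpA hpP using fun k => exists_eq_on_compl_of_mem_map_zeroOn (hP k)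
  have hZ : ∀ k, ∃ y ∈ CB, ∀ j ∉ Sc, y j = Z k j := by
    intro k
    by_cases hk : k ∈ Sr
    · exact ⟨0, CB.zero_mem, fun j _ => by simp [Z, zeroOn_apply, hk]⟩
    · exact ⟨B k, hB k, fun j hj => by simp [Z, zeroOn_apply, hk, hAB k hk j hj]⟩
  choose z hzB hzZ using hZ
  refine ⟨(of p)ᵀ * of z, transpose_mul_mem_of_transpose_mem hpA _,
    mul_row_mem_of_row_mem _ hzB, fun i hi j hj => ?_⟩
  calc ((of p)ᵀ * of z) i j = (P * Z) i j := by
        simp only [mul_apply, transpose_apply, of_apply, hpP _ i hi, hzZ _ j hj]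
    _ = A i j := by rw [hPZ]; simp [Z, zeroOn_apply, hi]

end Matrix

theorem hw_sub_le {n : ℕ} (x y : Fin n → ZMod 2) : hw (x - y) ≤ hw x + hw y := by
  have h := hammingDist_triangle y 0 x
  rw [hammingDist_zero_right, hammingDist_zero_left, hammingDist_eq_hammingNorm,
    neg_add_eq_sub, add_comm] at h
  exact h

theorem hw_le_card_of_eq_zero {n : ℕ} {x : Fin n → ZMod 2} {S : Finset (Fin n)}
    (h : ∀ i ∉ S, x i = 0) : hw x ≤ S.card :=
  Finset.card_le_card fun i hi => by_contra fun hiS => (Finset.mem_filter.mp hi).2 (h i hiS)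

theorem eq_zero_of_hw_lt {n : ℕ} {C : Submodule (ZMod 2) (Fin n → ZMod 2)} {d : ℝ}
    (hd : ∀ x ∈ C, x ≠ 0 → d ≤ (hw x : ℝ)) {x : Fin n → ZMod 2} (hx : x ∈ C)
    (h : (hw x : ℝ) < d) : x = 0 :=
  by_contra fun hx0 => (hd x hx hx0).not_gt h

theorem exists_mem_colCode_sub_mem_rowCode {Δ : ℕ} {CA CB : Submodule (ZMod 2) (Fin Δ → ZMod 2)}
    {d : ℝ} (hdA : ∀ x ∈ CA, x ≠ 0 → d ≤ (hw x : ℝ)) {X : Matrix (Fin Δ) (Fin Δ) (ZMod 2)}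
    (hX : X ∈ colCode CA ⊔ rowCode CB) {Sr Sc : Finset (Fin Δ)} (hSr : (Sr.card : ℝ) < d)
    (hXS : ∀ i j, i ∉ Sr → j ∉ Sc → X i j = 0) :
    ∃ A ∈ colCode CA, X - A ∈ rowCode CB ∧ ∀ i, ∀ j ∉ Sc, A i j = 0 := by
  obtain ⟨A, hA, B, hB, rfl⟩ := Submodule.mem_sup.mp hX
  obtain ⟨T, hTA, hTB, hTeq⟩ := Matrix.exists_tensor_eq_on_compl (CA := CA) (CB := CB)
    (B := -B) hA (fun i => CB.neg_mem (hB i)) fun i hi j hj =>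
      eq_neg_of_add_eq_zero_left (hXS i j hi hj)
  have hAT : A - T ∈ colCode CA := (colCode CA).sub_mem hA hTA
  refine ⟨A - T, hAT, ?_, fun i j hj => ?_⟩
  · rw [add_sub_sub_cancel]
    exact (rowCode CB).add_mem hB hTB
  · -- off `Sr` the columns of `A - T` vanish, so those outside `Sc` are too light to be nonzero
    have hcol : (fun i => (A - T) i j) = 0 := by
      refine eq_zero_of_hw_lt hdA (hAT j) (lt_of_le_of_lt ?_ hSr)
      exact_mod_cast hw_le_card_of_eq_zero fun i hi => by simp [hTeq i hi j hj]
    exact congrFun hcol i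

theorem sparse_small_support_vanishes_general (Δ : ℕ) (ε δ γ : ℝ)
    (CA CB : Submodule (ZMod 2) (Fin Δ → ZMod 2))
    (hdA : ∀ x ∈ CA, x ≠ 0 → δ * Δ ≤ (hw x : ℝ))
    (hdB : ∀ x ∈ CB, x ≠ 0 → δ * Δ ≤ (hw x : ℝ))
    (X : Matrix (Fin Δ) (Fin Δ) (ZMod 2))
    (hX : X ∈ colCode CA ⊔ rowCode CB)
    (hrow : ∀ i, ((Finset.univ.filter fun j => X i j ≠ 0).card : ℝ) ≤
      (Δ : ℝ) ^ ((1 : ℝ) / 2 + 2 * ε))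
    (hcol : ∀ j, ((Finset.univ.filter fun i => X i j ≠ 0).card : ℝ) ≤
      (Δ : ℝ) ^ ((1 : ℝ) / 2 + 2 * ε))
    (hsupp : ∃ Sr Sc : Finset (Fin Δ),
      (Sr.card : ℝ) ≤ γ * δ * Δ ∧ (Sc.card : ℝ) ≤ γ * δ * Δ ∧
      ∀ i j, i ∉ Sr → j ∉ Sc → X i j = 0)
    (hgap : (Δ : ℝ) ^ ((1 : ℝ) / 2 + 2 * ε) < (1 - γ) * δ * Δ) :
    X = 0 := by
  obtain ⟨Sr, Sc, hSr, hSc, hXS⟩ := hsupp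
  have hpow0 : 0 ≤ (Δ : ℝ) ^ ((1 : ℝ) / 2 + 2 * ε) := by positivity
  have hSr0 : (0 : ℝ) ≤ Sr.card := Nat.cast_nonneg _
  obtain ⟨A, hA, hXA, hAS⟩ := exists_mem_colCode_sub_mem_rowCode hdA hX (by linarith) hXS
  have hXA0 : X - A = 0 := by
    ext i j
    refine congrFun (eq_zero_of_hw_lt hdB (hXA i) ?_) j
    have hXi : (hw (X i) : ℝ) ≤ (Δ : ℝ) ^ ((1 : ℝ) / 2 + 2 * ε) := hrow i
    have hAi : (hw (A i) : ℝ) ≤ Sc.card := by exact_mod_cast hw_le_card_of_eq_zero (hAS i)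
    have hXAi : (hw ((X - A) i) : ℝ) ≤ hw (X i) + hw (A i) := by exact_mod_cast hw_sub_le _ _
    linarith
  obtain rfl : X = A := sub_eq_zero.mp hXA0
  ext i j
  have hXj : (hw fun i => X i j : ℝ) ≤ (Δ : ℝ) ^ ((1 : ℝ) / 2 + 2 * ε) := hcol j
  exact congrFun (eq_zero_of_hw_lt hdA (hA j) (by linarith)) i

/-- A sparse dual tensor codeword supported on at most `γδΔ` nonzero rows and at most
`γδΔ` nonzero columns must vanish, provided `Δ^{1/2+2ε} < (1−γ)δΔ`. -/
theorem sparse_small_support_vanishes (Δ : ℕ) (ε δ γ : ℝ)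
    (hε : 0 < ε) (hδ0 : 0 < δ) (hδ1 : δ < 1) (hγ0 : 0 < γ) (hγ1 : γ < 1)
    (CA CB : Submodule (ZMod 2) (Fin Δ → ZMod 2))
    (hdA : ∀ x ∈ CA, x ≠ 0 → δ * Δ ≤ (hw x : ℝ))
    (hdB : ∀ x ∈ CB, x ≠ 0 → δ * Δ ≤ (hw x : ℝ))
    (X : Matrix (Fin Δ) (Fin Δ) (ZMod 2))
    (hX : X ∈ colCode CA ⊔ rowCode CB)
    (hrow : ∀ i, ((Finset.univ.filter fun j => X i j ≠ 0).card : ℝ) ≤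
      (Δ : ℝ) ^ ((1 : ℝ) / 2 + 2 * ε))
    (hcol : ∀ j, ((Finset.univ.filter fun i => X i j ≠ 0).card : ℝ) ≤
      (Δ : ℝ) ^ ((1 : ℝ) / 2 + 2 * ε))
    (hsupp : ∃ Sr Sc : Finset (Fin Δ),
      (Sr.card : ℝ) ≤ γ * δ * Δ ∧ (Sc.card : ℝ) ≤ γ * δ * Δ ∧
      ∀ i j, i ∉ Sr → j ∉ Sc → X i j = 0)
    (hgap : (Δ : ℝ) ^ ((1 : ℝ) / 2 + 2 * ε) < (1 - γ) * δ * Δ) :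
    X = 0 :=
  sparse_small_support_vanishes_general Δ ε δ γ CA CB hdA hdB X hX hrow hcol hsupp hgap
end
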